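/- arXiv:2006.09998 — 3 statements merged into one kernel-verified Lean document; each statement's English description precedes it below -/
import Mathlib

section
/- For the connection of M(c), the covariant derivative of the Ricci tensor ∇ρ vanishes if and only if c = 0; i.e., M(c) is affine symmetric if and only if c = 0. -/
noncomputable def e : Fin 2 → ℝ × ℝ
  | 0 => (1, 0)
  | 1 => (0, 1)

noncomputable def pd (i : Fin 2) (f : ℝ × ℝ → ℝ) (p : ℝ × ℝ) : ℝ :=
  fderiv ℝ f p (e i)

/-- Christoffel symbols of `M(c)`. -/
noncomputable def Γ (c : ℝ) (i j k : Fin 2) (p : ℝ × ℝ) : ℝ :=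
  if i = 1 ∧ j = 1 then (if k = 0 then (1 + c ^ 2) * p.1 else 2 * c) else 0

/-- The Ricci tensor of `M(c)`: `ρ = (1+c²) dx²⊗dx²`. -/
noncomputable def ricci (c : ℝ) (i j : Fin 2) (_p : ℝ × ℝ) : ℝ :=
  if i = 1 ∧ j = 1 then 1 + c ^ 2 else 0

/-- Covariant derivative of the Ricci tensor:
`(∇ρ)(∂ᵢ,∂ⱼ;∂ₖ) = ∂ₖρ_{ij} − Σ_m Γ_{ki}^m ρ_{mj} − Σ_m Γ_{kj}^m ρ_{im}`. -/
noncomputable def nablaRicci (c : ℝ) (i j k : Fin 2) (p : ℝ × ℝ) : ℝ :=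
  pd k (ricci c i j) p - ∑ m : Fin 2, Γ c k i m p * ricci c m j p
    - ∑ m : Fin 2, Γ c k j m p * ricci c i m p

lemma pd_const (k : Fin 2) (a : ℝ) (p : ℝ × ℝ) : pd k (fun _ => a) p = 0 := by
  simp [pd]

/-- Since `ρ` has constant coefficients, only the term `-2 Γ₂₂² ρ₂₂` survives, in the component
`(∇ρ)(∂₂,∂₂;∂₂)` (the index `1 : Fin 2` is the paper's `2`). -/
lemma nablaRicci_eq (c : ℝ) (i j k : Fin 2) (p : ℝ × ℝ) :
    nablaRicci c i j k p = if i = 1 ∧ j = 1 ∧ k = 1 then -4 * c * (1 + c ^ 2) else 0 := by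
  rw [nablaRicci, show pd k (ricci c i j) p = 0 from pd_const k _ p]
  fin_cases i <;> fin_cases j <;> fin_cases k <;> simp [Γ, ricci]
  ring

/-- `∇ρ = 0` for `M(c)` if and only if `c = 0`;
i.e., `M(c)` is affine symmetric if and only if `c = 0`. -/
theorem Mc_affine_symmetric_iff (c : ℝ) :
    (∀ i j k : Fin 2, ∀ p : ℝ × ℝ, nablaRicci c i j k p = 0) ↔ c = 0 := by
  have h_one_add_sq : 1 + c ^ 2 ≠ 0 := by positivity
  simp_rw [nablaRicci_eq]
  constructor
  · intro h
    simpa [h_one_add_sq] using h 1 1 1 0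
  · rintro rfl
    simp
end

section
/- Setting α(c) := (∇ρ(∂₂,∂₂;∂₂))² / (ρ(∂₂,∂₂))³ for the geometry M(c), one has α(c) = 16c²/(1+c²); consequently for c, c̃ ≥ 0, α(c) = α(c̃) implies c = c̃. -/
/-- `∇ρ(∂₂,∂₂;∂₂) = ∂₂ρ₂₂ − 2Σ_k Γ₂₂ᵏ ρ_{k2}`. -/
noncomputable def nablaRho222 (c : ℝ) (p : ℝ × ℝ) : ℝ :=
  pd 1 (ricci c 1 1) p - 2 * ∑ k : Fin 2, Γ c 1 1 k p * ricci c k 1 p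

/-- The affine invariant `α(c) := (∇ρ(∂₂,∂₂;∂₂))² / (ρ(∂₂,∂₂))³`. -/
noncomputable def alphaInv (c : ℝ) (p : ℝ × ℝ) : ℝ :=
  (nablaRho222 c p) ^ 2 / (ricci c 1 1 p) ^ 3

lemma key (c : ℝ) (p : ℝ × ℝ) : alphaInv c p = 16 * c ^ 2 / (1 + c ^ 2) := by
  have h1 : (1:ℝ) + c ^ 2 > 0 := by positivity
  have hpd : pd 1 (ricci c 1 1) p = 0 := by
    have : ricci c 1 1 = fun _ => 1 + c ^ 2 := by funext q; simp [ricci]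
    simp [pd, this]
  have hsum : nablaRho222 c p = -4 * c * (1 + c ^ 2) := by
    simp [nablaRho222, hpd, Fin.sum_univ_two, Γ, ricci]
    ring
  rw [alphaInv, hsum]
  have : ricci c 1 1 p = 1 + c ^ 2 := by simp [ricci]
  rw [this]
  field_simp
  ring

/-- `α(c) = 16c²/(1+c²)`, and consequently for `c, c̃ ≥ 0`,
`α(c) = α(c̃)` implies `c = c̃`. -/
theorem alpha_invariant :
    (∀ c : ℝ, ∀ p : ℝ × ℝ, alphaInv c p = 16 * c ^ 2 / (1 + c ^ 2)) ∧
    (∀ c c' : ℝ, 0 ≤ c → 0 ≤ c' →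
      (∀ p : ℝ × ℝ, alphaInv c p = alphaInv c' p) → c = c') := by
  refine ⟨key, fun c c' hc hc' h => ?_⟩
  have := h (0, 0)
  rw [key, key] at this
  have h1 : (1:ℝ) + c ^ 2 > 0 := by positivity
  have h2 : (1:ℝ) + c' ^ 2 > 0 := by positivity
  have hsq : c ^ 2 = c' ^ 2 := by
    field_simp at this
    nlinarith
  nlinarith
end

section
/- For b ≠ 0, the curve σ(t) = (u cos(bt) + (a/b) sin(bt), bt + v) satisfies the geodesic equations of M(0): (σ¹)'' + x¹·((σ²)')² = 0 and (σ²)'' = 0, with σ(0) = (u,v) and σ'(0) = (a,b); for b = 0, σ(t) = (at+u, v) is a geodesic. Hence every geodesic of M(0) is defined for all t ∈ ℝ, so M(0) is geodesically complete. -/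
open Real

/-- The geodesic equations of `M(0)` (only nonzero Christoffel symbol
`Γ₂₂¹ = x¹`) for a curve `σ : ℝ → ℝ²`:
`(σ¹)'' + σ¹·((σ²)')² = 0` and `(σ²)'' = 0`. -/
def IsGeodesicM0 (σ : ℝ → ℝ × ℝ) : Prop :=
  ∀ t : ℝ,
    deriv (deriv fun s => (σ s).1) t
        + (σ t).1 * (deriv (fun s => (σ s).2) t) ^ 2 = 0 ∧
    deriv (deriv fun s => (σ s).2) t = 0

lemma IsGeodesicM0.of_hasDerivAt {σ : ℝ → ℝ × ℝ} {x' x'' y' y'' : ℝ → ℝ}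
    (hx : ∀ t, HasDerivAt (fun s => (σ s).1) (x' t) t) (hx' : ∀ t, HasDerivAt x' (x'' t) t)
    (hy : ∀ t, HasDerivAt (fun s => (σ s).2) (y' t) t) (hy' : ∀ t, HasDerivAt y' (y'' t) t)
    (h₁ : ∀ t, x'' t + (σ t).1 * y' t ^ 2 = 0) (h₂ : ∀ t, y'' t = 0) :
    IsGeodesicM0 σ := by
  have hdx : deriv (fun s => (σ s).1) = x' := funext fun t => (hx t).deriv
  have hdy : deriv (fun s => (σ s).2) = y' := funext fun t => (hy t).deriv
  intro t
  rw [hdx, hdy, (hx' t).deriv, (hy' t).deriv]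
  exact ⟨h₁ t, h₂ t⟩

lemma hasDerivAt_mul_add_const (b v t : ℝ) : HasDerivAt (fun s => b * s + v) b t := by
  simpa using ((hasDerivAt_id t).const_mul b).add_const v

/-- Differentiation maps `s ↦ u cos(bs) + c sin(bs)` to the function of the same shape with
coefficients `(bc, -bu)`, so it can be applied twice. -/
lemma hasDerivAt_cos_add_sin (u c b t : ℝ) :
    HasDerivAt (fun s => u * cos (b * s) + c * sin (b * s))
      (b * c * cos (b * t) + -(b * u) * sin (b * t)) t := by
  have hbs := (hasDerivAt_id t).const_mul b
  have hcos := ((hasDerivAt_cos _).comp t hbs).const_mul u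
  have hsin := ((hasDerivAt_sin _).comp t hbs).const_mul c
  refine (hcos.add hsin).congr_deriv ?_
  simp only [id_eq, mul_one]
  ring

lemma isGeodesicM0_cos_add_sin (u c b v : ℝ) :
    IsGeodesicM0 fun t => (u * cos (b * t) + c * sin (b * t), b * t + v) :=
  .of_hasDerivAt (hasDerivAt_cos_add_sin u c b) (hasDerivAt_cos_add_sin _ _ b)
    (hasDerivAt_mul_add_const b v) (fun _ => hasDerivAt_const _ b)
    (fun t => by ring) (fun _ => rfl)

lemma deriv_cos_add_div_sin_zero {b : ℝ} (hb : b ≠ 0) (u v a : ℝ) :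
    deriv (fun t => (u * cos (b * t) + a / b * sin (b * t), b * t + v)) 0 = (a, b) := by
  simpa [mul_div_cancel₀ a hb] using
    ((hasDerivAt_cos_add_sin u (a / b) b 0).prodMk (hasDerivAt_mul_add_const b v 0)).deriv

lemma isGeodesicM0_affine (u v a : ℝ) : IsGeodesicM0 fun t => (a * t + u, v) :=
  .of_hasDerivAt (hasDerivAt_mul_add_const a u) (fun _ => hasDerivAt_const _ a)
    (fun _ => hasDerivAt_const _ v) (fun _ => hasDerivAt_const _ 0)
    (fun _ => by simp) (fun _ => rfl)

lemma deriv_affine_zero (u v a : ℝ) : deriv (fun t => (a * t + u, v)) 0 = (a, 0) :=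
  ((hasDerivAt_mul_add_const a u 0).prodMk (hasDerivAt_const 0 v)).deriv

/-- for `b ≠ 0` the curve
`σ(t) = (u cos(bt) + (a/b) sin(bt), bt + v)` is a geodesic of `M(0)` with
`σ(0) = (u,v)`, `σ'(0) = (a,b)`; for `b = 0`, `σ(t) = (at+u, v)` is a geodesic;
hence every initial condition admits a geodesic defined for all of `ℝ`,
so `M(0)` is geodesically complete. -/
theorem M0_geodesics_and_complete :
    (∀ u v a b : ℝ, b ≠ 0 →
      IsGeodesicM0 (fun t => (u * Real.cos (b * t) + (a / b) * Real.sin (b * t),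
          b * t + v)) ∧
      (fun t : ℝ => (u * Real.cos (b * t) + (a / b) * Real.sin (b * t),
          b * t + v)) 0 = (u, v) ∧
      deriv (fun t : ℝ => (u * Real.cos (b * t) + (a / b) * Real.sin (b * t),
          b * t + v)) 0 = (a, b)) ∧
    (∀ u v a : ℝ,
      IsGeodesicM0 (fun t => (a * t + u, v)) ∧
      (fun t : ℝ => (a * t + u, v)) 0 = (u, v) ∧
      deriv (fun t : ℝ => (a * t + u, v)) 0 = (a, 0)) ∧
    (∀ u v a b : ℝ, ∃ σ : ℝ → ℝ × ℝ,
      IsGeodesicM0 σ ∧ σ 0 = (u, v) ∧ deriv σ 0 = (a, b)) := by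
  refine ⟨fun u v a b hb => ⟨isGeodesicM0_cos_add_sin u (a / b) b v, by simp,
      deriv_cos_add_div_sin_zero hb u v a⟩,
    fun u v a => ⟨isGeodesicM0_affine u v a, by simp, deriv_affine_zero u v a⟩,
    fun u v a b => ?_⟩
  rcases eq_or_ne b 0 with rfl | hb
  · exact ⟨_, isGeodesicM0_affine u v a, by simp, deriv_affine_zero u v a⟩
  · exact ⟨_, isGeodesicM0_cos_add_sin u (a / b) b v, by simp,
      deriv_cos_add_div_sin_zero hb u v a⟩
end
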